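/- arXiv:2112.13363 — 2 statements merged into one kernel-verified Lean document; each statement's English description precedes it below -/
import Mathlib

section
/- Subadditivity-type inequality for Υ^{m,M} (Lemma 3.3): For every m ∈ ℕ⁺, every M ≥ 3 and all x, y ∈ 𝒟₀, one has Υ^{m,M}(x+y) ≤ 2^{2m-1} (Υ^{m,M}(x) + Υ^{m,M}(y)). -/
open Filter Topology MeasureTheory Matrix
open scoped RealInnerProductSpace

noncomputable section

namespace PathHJB

/-- The domain `(-∞,0]` of the paths. -/
abbrev PathDom : Type := Set.Iic (0 : ℝ)

abbrev Eucl (d : ℕ) := EuclideanSpace ℝ (Fin d)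

/-- Paths on `(-∞,0]` with values in `ℝ^d`. -/
abbrev Pth (d : ℕ) := PathDom → Eucl d

def zeroPt : PathDom := ⟨0, Set.self_mem_Iic⟩

/-- The sup norm `|x|_C`. -/
def normC {d : ℕ} (x : Pth d) : ℝ := ⨆ θ : PathDom, ‖x θ‖

/-- The shifted path `x_h`. -/
def shift {d : ℕ} (x : Pth d) (h : ℝ) : Pth d := fun θ =>
  if hθ : -h ≤ θ.1 then x zeroPt
  else x ⟨θ.1 + h, Set.mem_Iic.mpr (by push_neg at hθ; linarith)⟩

/-- The vertical perturbation `x + v · 1_{{0}}`. -/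
def vpert {d : ℕ} (x : Pth d) (v : Eucl d) : Pth d := fun θ =>
  if θ.1 = 0 then x θ + v else x θ

/-- Càdlàg: right-continuous with left limits. -/
def IsCadlag {d : ℕ} (x : Pth d) : Prop :=
  (∀ θ : PathDom, ContinuousWithinAt x {η : PathDom | θ.1 ≤ η.1} θ) ∧
  (∀ θ : PathDom, ∃ L : Eucl d, Tendsto x (nhdsWithin θ {η : PathDom | η.1 < θ.1}) (nhds L))

/-- `𝒟₀`: càdlàg paths vanishing at `-∞`. -/
def D0 (d : ℕ) : Set (Pth d) := {x | IsCadlag x ∧ Tendsto x atBot (nhds 0)}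

/-- `𝒞₀`: continuous paths vanishing at `-∞`. -/
def C0 (d : ℕ) : Set (Pth d) := {x | Continuous x ∧ Tendsto x atBot (nhds 0)}

/-- The metric `d_∞`. -/
def dInfty {d : ℕ} (p q : ℝ × Pth d) : ℝ :=
  if p.1 ≤ q.1 then |q.1 - p.1| + normC (shift p.2 (q.1 - p.1) - q.2)
  else |p.1 - q.1| + normC (shift q.2 (p.1 - q.1) - p.2)

/-- `Λ̂^t = [t,∞) × 𝒟₀`. -/
def LamHat (d : ℕ) (t : ℝ) : Set (ℝ × Pth d) := {p | t ≤ p.1 ∧ p.2 ∈ D0 d}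

/-- `Λ^t = [t,∞) × 𝒞₀`. -/
def Lam (d : ℕ) (t : ℝ) : Set (ℝ × Pth d) := {p | t ≤ p.1 ∧ p.2 ∈ C0 d}

def stdBasis (d : ℕ) (i : Fin d) : Eucl d := EuclideanSpace.single i 1

/-- Horizontal (Dupire) derivative. -/
def HasHorizDerivAt {d : ℕ} (f : ℝ × Pth d → ℝ) (p : ℝ × Pth d) (v : ℝ) : Prop :=
  Tendsto (fun h : ℝ => (f (p.1 + h, shift p.2 h) - f p) / h) (𝓝[>] (0:ℝ)) (𝓝 v)

/-- Vertical (Dupire) derivative in direction `e_i`. -/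
def HasVertDerivAt {d : ℕ} (f : ℝ × Pth d → ℝ) (p : ℝ × Pth d) (i : Fin d) (v : ℝ) : Prop :=
  Tendsto (fun h : ℝ => (f (p.1, vpert p.2 (h • stdBasis d i)) - f p) / h) (𝓝[≠] (0:ℝ)) (𝓝 v)

/-- Continuity on a set w.r.t. `d_∞`. -/
def DContinuousOn {d : ℕ} {E : Type*} [NormedAddCommGroup E]
    (f : ℝ × Pth d → E) (S : Set (ℝ × Pth d)) : Prop :=
  ∀ p ∈ S, ∀ ε > (0:ℝ), ∃ δ > (0:ℝ), ∀ q ∈ S, dInfty p q < δ → ‖f q - f p‖ < ε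

/-- Uniform continuity on a set w.r.t. `d_∞`. -/
def DUnifContOn {d : ℕ} {E : Type*} [NormedAddCommGroup E]
    (f : ℝ × Pth d → E) (S : Set (ℝ × Pth d)) : Prop :=
  ∀ ε > (0:ℝ), ∃ δ > (0:ℝ), ∀ p ∈ S, ∀ q ∈ S, dInfty p q < δ → ‖f q - f p‖ < ε

def BoundedOn {d : ℕ} {E : Type*} [NormedAddCommGroup E]
    (f : ℝ × Pth d → E) (S : Set (ℝ × Pth d)) : Prop :=
  ∃ M : ℝ, ∀ p ∈ S, ‖f p‖ ≤ M

def PolyGrowthOn {d : ℕ} {E : Type*} [NormedAddCommGroup E]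
    (f : ℝ × Pth d → E) (S : Set (ℝ × Pth d)) : Prop :=
  ∃ C : ℝ, ∃ k : ℕ, ∀ p ∈ S, ‖f p‖ ≤ C * (1 + |p.1| + normC p.2) ^ k

/-- `f ∈ C_p^{1,2}(Λ̂^t)`, with prescribed pathwise derivatives. -/
structure IsCp12Hat (d : ℕ) (t : ℝ) (f : ℝ × Pth d → ℝ) (ft : ℝ × Pth d → ℝ)
    (fx : ℝ × Pth d → Eucl d) (fxx : ℝ × Pth d → Matrix (Fin d) (Fin d) ℝ) : Prop where
  horiz : ∀ p ∈ LamHat d t, HasHorizDerivAt f p (ft p)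
  vert : ∀ p ∈ LamHat d t, ∀ i, HasVertDerivAt f p i (fx p i)
  vert2 : ∀ p ∈ LamHat d t, ∀ i j, HasVertDerivAt (fun q => fx q j) p i (fxx p i j)
  cont : DContinuousOn f (LamHat d t)
  cont_t : DContinuousOn ft (LamHat d t)
  cont_x : DContinuousOn fx (LamHat d t)
  cont_xx : ∀ i j, DContinuousOn (fun p => fxx p i j) (LamHat d t)
  growth : PolyGrowthOn f (LamHat d t)
  growth_t : PolyGrowthOn ft (LamHat d t)
  growth_x : PolyGrowthOn fx (LamHat d t)
  growth_xx : ∀ i j, PolyGrowthOn (fun p => fxx p i j) (LamHat d t)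

/-- Hilbert–Schmidt norm of a matrix. -/
def hsNorm {m n : ℕ} (A : Matrix (Fin m) (Fin n) ℝ) : ℝ :=
  Real.sqrt (∑ i, ∑ j, (A i j) ^ 2)

/-- The Hamiltonian `H`. -/
def Ham {d n : ℕ} {U : Type*} (b : Pth d → U → Eucl d)
    (σ' : Pth d → U → Matrix (Fin d) (Fin n) ℝ) (q : Pth d → U → ℝ)
    (x : Pth d) (p : Eucl d) (l : Matrix (Fin d) (Fin d) ℝ) : ℝ :=
  ⨅ u : U, ((inner ℝ p (b x u) : ℝ) + (1/2) * (l * (σ' x u * (σ' x u)ᵀ)).trace + q x u)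

/-- Hypothesis 4.2. -/
structure Hyp42 {d n : ℕ} {U : Type*} [PseudoMetricSpace U] (L : ℝ)
    (b : Pth d → U → Eucl d) (σ' : Pth d → U → Matrix (Fin d) (Fin n) ℝ)
    (q : Pth d → U → ℝ) : Prop where
  pos : 0 < L
  continuous : ∀ x ∈ C0 d, ∀ u : U, ∀ ε > (0:ℝ), ∃ δ > (0:ℝ), ∀ y ∈ C0 d, ∀ u' : U,
    normC (x - y) < δ → dist u u' < δ →
    ‖b x u - b y u'‖ < ε ∧ hsNorm (σ' x u - σ' y u') < ε ∧ |q x u - q y u'| < ε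
  bound_b : ∀ x ∈ C0 d, ∀ u : U, ‖b x u‖ ^ 2 ≤ L ^ 2 * (1 + normC x ^ 2)
  bound_σ : ∀ x ∈ C0 d, ∀ u : U, hsNorm (σ' x u) ^ 2 ≤ L ^ 2 * (1 + normC x ^ 2)
  bound_q : ∀ x ∈ C0 d, ∀ u : U, (q x u) ^ 2 ≤ L ^ 2 * (1 + normC x ^ 2)
  lip_b : ∀ x ∈ C0 d, ∀ y ∈ C0 d, ∀ u : U, ‖b x u - b y u‖ ≤ L * normC (x - y)
  lip_σ : ∀ x ∈ C0 d, ∀ y ∈ C0 d, ∀ u : U, hsNorm (σ' x u - σ' y u) ≤ L * normC (x - y)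
  lip_q : ∀ x ∈ C0 d, ∀ y ∈ C0 d, ∀ u : U, |q x u - q y u| ≤ L * normC (x - y)

/-- Viscosity subsolution of `-λ w + ∂_t w + H(x, ∂_x w, ∂_{xx} w) = 0`. -/
def IsViscSubsol {d n : ℕ} {U : Type*} (lam : ℝ) (b : Pth d → U → Eucl d)
    (σ' : Pth d → U → Matrix (Fin d) (Fin n) ℝ) (q : Pth d → U → ℝ)
    (w : Pth d → ℝ) : Prop :=
  ∀ s : ℝ, 0 ≤ s → ∀ x ∈ C0 d,
    ∀ (φ φt : ℝ × Pth d → ℝ) (φx : ℝ × Pth d → Eucl d)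
      (φxx : ℝ × Pth d → Matrix (Fin d) (Fin d) ℝ),
      IsCp12Hat d s φ φt φx φxx →
      w x - φ (s, x) = 0 →
      (∀ p ∈ Lam d s, w p.2 - φ p ≤ 0) →
      0 ≤ -lam * w x + φt (s, x) + Ham b σ' q x (φx (s, x)) (φxx (s, x))

/-- Viscosity supersolution. -/
def IsViscSupersol {d n : ℕ} {U : Type*} (lam : ℝ) (b : Pth d → U → Eucl d)
    (σ' : Pth d → U → Matrix (Fin d) (Fin n) ℝ) (q : Pth d → U → ℝ)
    (w : Pth d → ℝ) : Prop :=
  ∀ s : ℝ, 0 ≤ s → ∀ x ∈ C0 d,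
    ∀ (φ φt : ℝ × Pth d → ℝ) (φx : ℝ × Pth d → Eucl d)
      (φxx : ℝ × Pth d → Matrix (Fin d) (Fin d) ℝ),
      IsCp12Hat d s φ φt φx φxx →
      w x + φ (s, x) = 0 →
      (∀ p ∈ Lam d s, 0 ≤ w p.2 + φ p) →
      -lam * w x - φt (s, x) + Ham b σ' q x (-φx (s, x)) (-φxx (s, x)) ≤ 0


/-- The two-argument functional `S_m(t,x,s,y)`. -/
def SmP {d : ℕ} (m : ℕ) (p q : ℝ × Pth d) : ℝ :=
  if normC (shift p.2 (max (q.1 - p.1) 0) - shift q.2 (max (p.1 - q.1) 0)) = 0 then 0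
  else (normC (shift p.2 (max (q.1 - p.1) 0) - shift q.2 (max (p.1 - q.1) 0)) ^ (2*m)
        - ‖p.2 zeroPt - q.2 zeroPt‖ ^ (2*m)) ^ 3
       / normC (shift p.2 (max (q.1 - p.1) 0) - shift q.2 (max (p.1 - q.1) 0)) ^ (4*m)

/-- `Υ^{m,M}(t,x,s,y)`. -/
def UpsP {d : ℕ} (m : ℕ) (M : ℝ) (p q : ℝ × Pth d) : ℝ :=
  SmP m p q + M * ‖p.2 zeroPt - q.2 zeroPt‖ ^ (2*m)

/-- `Ῡ^{m,M}(t,x,s,y) = Υ^{m,M}(t,x,s,y) + |s-t|²`. -/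
def UpsBarP {d : ℕ} (m : ℕ) (M : ℝ) (p q : ℝ × Pth d) : ℝ :=
  UpsP m M p q + (q.1 - p.1) ^ 2

/-- The single-path functional `Υ^{m,M}(x)`. -/
def Ups0 {d : ℕ} (m : ℕ) (M : ℝ) (x : Pth d) : ℝ :=
  (if normC x = 0 then 0
   else (normC x ^ (2*m) - ‖x zeroPt‖ ^ (2*m)) ^ 3 / normC x ^ (4*m))
  + M * ‖x zeroPt‖ ^ (2*m)

/-- `w̃^{t̂}` before taking the upper semicontinuous envelope:
the sup of `w(t,ξ)` over `ξ ∈ 𝒞₀` with `ξ(0) = x₀`. -/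
def sliceSup {d : ℕ} (w : ℝ × Pth d → ℝ) (t : ℝ) (x0 : Eucl d) : ℝ :=
  sSup {r : ℝ | ∃ ξ ∈ C0 d, ξ zeroPt = x0 ∧ r = w (t, ξ)}

def tildeW {d : ℕ} (w : ℝ × Pth d → ℝ) (tHat : ℝ) : ℝ × Eucl d → ℝ := fun p =>
  if tHat ≤ p.1 then sliceSup w p.1 p.2
  else sliceSup w tHat p.2 - Real.sqrt (tHat - p.1)

/-- Upper semicontinuous envelope. -/
def uscEnv {d : ℕ} (g : ℝ × Eucl d → ℝ) : ℝ × Eucl d → ℝ := fun p =>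
  Filter.limsup g (nhds p)

/-- A local modulus of continuity. -/
structure LocalModulus (ρ : ℝ → ℝ → ℝ) : Prop where
  cont : Continuous fun p : ℝ × ℝ => ρ p.1 p.2
  nonneg : ∀ t r, 0 ≤ t → 0 ≤ r → 0 ≤ ρ t r
  zero : ∀ r, 0 ≤ r → ρ 0 r = 0
  subadd : ∀ t s r, 0 ≤ t → 0 ≤ s → 0 ≤ r → ρ (t + s) r ≤ ρ t r + ρ s r
  mono : ∀ t r r', 0 ≤ t → 0 ≤ r → r ≤ r' → ρ t r ≤ ρ t r'

/-- Upper semicontinuity on a set w.r.t. `d_∞`. -/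
def DUSCOn {d : ℕ} (w : ℝ × Pth d → ℝ) (S : Set (ℝ × Pth d)) : Prop :=
  ∀ p ∈ S, ∀ ε > (0:ℝ), ∃ δ > (0:ℝ), ∀ q ∈ S, dInfty p q < δ → w q < w p + ε

def BddAboveOn {d : ℕ} (w : ℝ × Pth d → ℝ) (S : Set (ℝ × Pth d)) : Prop :=
  ∃ M : ℝ, ∀ p ∈ S, w p ≤ M

/-- `limsup_{t+|x|_C → ∞} w(t,x)/(t+|x|_C) < 0` on `Λ`. -/
def NegLimsupAtInfty {d : ℕ} (w : ℝ × Pth d → ℝ) : Prop :=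
  ∃ c < (0:ℝ), ∃ R : ℝ, ∀ p ∈ Lam d 0, R ≤ p.1 + normC p.2 →
    w p ≤ c * (p.1 + normC p.2)

/-- `φ ∈ C^{1,2}([0,∞) × ℝ^d)` with prescribed derivatives. -/
structure IsC12Fin (d : ℕ) (φ φt : ℝ × Eucl d → ℝ) (φx : ℝ × Eucl d → Eucl d)
    (φxx : ℝ × Eucl d → Matrix (Fin d) (Fin d) ℝ) : Prop where
  ht : ∀ p : ℝ × Eucl d, HasDerivAt (fun s => φ (s, p.2)) (φt p) p.1
  hx : ∀ p : ℝ × Eucl d, HasGradientAt (fun y => φ (p.1, y)) (φx p) p.2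
  hxx : ∀ p : ℝ × Eucl d, ∀ i j,
    HasDerivAt (fun h : ℝ => φx (p.1, p.2 + h • stdBasis d j) i) (φxx p i j) 0
  cont : Continuous φ
  cont_t : Continuous φt
  cont_x : Continuous φx
  cont_xx : ∀ i j, Continuous fun p => φxx p i j

/-- The class `Φ(t̂, x̂₀, T)` of Definition 6.1. -/
def PhiClass (d : ℕ) (tHat : ℝ) (xHat0 : Eucl d) (T : ℝ) (f : ℝ × Eucl d → ℝ) : Prop :=
  ∃ r > (0:ℝ), ∀ L > (0:ℝ),
    ∀ (φ φt : ℝ × Eucl d → ℝ) (φx : ℝ × Eucl d → Eucl d)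
      (φxx : ℝ × Eucl d → Matrix (Fin d) (Fin d) ℝ),
      IsC12Fin d φ φt φx φxx →
      ∀ t : ℝ, ∀ x0 : Eucl d, 0 < t → t < T →
        (∀ s : ℝ, ∀ y : Eucl d, 0 ≤ s → s ≤ T → f (s, y) - φ (s, y) ≤ f (t, x0) - φ (t, x0)) →
        ∃ C > (0:ℝ),
          (|t - tHat| + ‖x0 - xHat0‖ < r →
           |f (t, x0)| + ‖φx (t, x0)‖ + hsNorm (φxx (t, x0)) ≤ L →
           C ≤ φt (t, x0))

/-- Operator norm of a square matrix, via the associated Euclidean linear map. -/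
def matOpNorm {ι : Type*} [Fintype ι] [DecidableEq ι] (A : Matrix ι ι ℝ) : ℝ :=
  ‖LinearMap.toContinuousLinearMap (Matrix.toEuclideanLin A)‖

/-- The second-derivative matrix of `φ : ℝ^d × ℝ^d → ℝ` at a point, as a
`(2d) × (2d)` matrix indexed by `Fin d ⊕ Fin d`. -/
def hess2 {d : ℕ} (φ : Eucl d × Eucl d → ℝ) (z : Eucl d × Eucl d) :
    Matrix (Fin d ⊕ Fin d) (Fin d ⊕ Fin d) ℝ := fun k l =>
  iteratedFDeriv ℝ 2 φ z
    ![Sum.elim (fun i => ((stdBasis d i, 0) : Eucl d × Eucl d))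
        (fun j => ((0, stdBasis d j) : Eucl d × Eucl d)) k,
      Sum.elim (fun i => ((stdBasis d i, 0) : Eucl d × Eucl d))
        (fun j => ((0, stdBasis d j) : Eucl d × Eucl d)) l]

/-- Hessian matrix of `φ : ℝ^d → ℝ`. -/
def hess1 {d : ℕ} (φ : Eucl d → ℝ) (z : Eucl d) : Matrix (Fin d) (Fin d) ℝ := fun i j =>
  iteratedFDeriv ℝ 2 φ z ![stdBasis d i, stdBasis d j]


/-- The path `x - a_{t-t̂}` appearing in `S_m(t,x,t̂,a)` (for `t ≥ t̂`). -/
def zRel {d : ℕ} (tHat : ℝ) (a : Pth d) (p : ℝ × Pth d) : Pth d :=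
  shift p.2 (max (tHat - p.1) 0) - shift a (max (p.1 - tHat) 0)

/-! Write `A = |x|_C^{2m}` and `B = |x(0)|^{2m}`, so that `Υ^{m,M}(x) = F(A, B) + (M - 3) B` with
`F(A, B) = (A - B)³ / A² + 3 B` (`upsCore`). On the cone `0 ≤ B ≤ A` the function `F` is
nondecreasing in each variable, positively homogeneous of degree one and subadditive (the
cube-over-square part is the perspective of the convex function `t ↦ t³`). Paths in `𝒟₀` are
bounded, so `|·|_C` obeys the triangle inequality, and `(a + b)^{2m} ≤ 2^{2m-1} (a^{2m} + b^{2m})`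
then bounds both arguments of `F` at `x + y`; the remaining term `(M - 3) B` is handled in the
same way because `M ≥ 3`. -/

def upsCore (A B : ℝ) : ℝ := (A - B) ^ 3 / A ^ 2 + 3 * B

section upsCore

variable {A A' B B' : ℝ}

lemma upsCore_zero_zero : upsCore 0 0 = 0 := by
  simp [upsCore]

lemma upsCore_nonneg (hB : 0 ≤ B) (hBA : B ≤ A) : 0 ≤ upsCore A B := by
  have := sub_nonneg.2 hBA
  unfold upsCore
  positivity

lemma upsCore_mono_left (hB : 0 ≤ B) (hBA : B ≤ A) (hAA' : A ≤ A') (hA : 0 < A) :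
    upsCore A B ≤ upsCore A' B := by
  have hA' : 0 < A' := hA.trans_le hAA'
  have hperspective : ∀ {A : ℝ}, 0 < A → (A - B) ^ 3 / A ^ 2 = A * (1 - B / A) ^ 3 := by
    intro A hA
    field_simp
  have : 0 ≤ 1 - B / A := sub_nonneg.2 ((div_le_one hA).2 hBA)
  unfold upsCore
  rw [hperspective hA, hperspective hA']
  gcongr

lemma upsCore_mono_right (hB : 0 ≤ B) (hBB' : B ≤ B') (hB'A : B' ≤ A) (hA : 0 < A) :
    upsCore A B ≤ upsCore A B' := by
  -- `∂_B (A - B)³ = -3 (A - B)²` is at least `-3 A²` on `[0, A]`.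
  have hcube : (A - B) ^ 3 - (A - B') ^ 3 ≤ (B' - B) * (3 * A ^ 2) := by
    have h₁ : (A - B) ^ 2 ≤ A ^ 2 := pow_le_pow_left₀ (by linarith) (by linarith) 2
    have h₂ : (A - B') ^ 2 ≤ A ^ 2 := pow_le_pow_left₀ (by linarith) (by linarith) 2
    have h₁₂ : (A - B) * (A - B') ≤ A ^ 2 := by
      rw [sq]
      exact mul_le_mul (by linarith) (by linarith) (by linarith) hA.le
    calc (A - B) ^ 3 - (A - B') ^ 3
        = (B' - B) * ((A - B) ^ 2 + (A - B) * (A - B') + (A - B') ^ 2) := by ring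
      _ ≤ (B' - B) * (3 * A ^ 2) := by gcongr; linarith
  have : (A - B) ^ 3 / A ^ 2 ≤ (A - B') ^ 3 / A ^ 2 + 3 * (B' - B) := by
    rw [div_add' _ _ _ (by positivity), div_le_div_iff_of_pos_right (by positivity)]
    linarith
  unfold upsCore
  linarith

lemma upsCore_mono (hB : 0 ≤ B) (hBA : B ≤ A) (hAA' : A ≤ A') (hBB' : B ≤ B')
    (hB'A' : B' ≤ A') : upsCore A B ≤ upsCore A' B' := by
  rcases (hB.trans hBA).eq_or_lt with rfl | hA
  · obtain rfl : B = 0 := le_antisymm hBA hB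
    rw [upsCore_zero_zero]
    exact upsCore_nonneg (hB.trans hBB') hB'A'
  calc upsCore A B ≤ upsCore A' B := upsCore_mono_left hB hBA hAA' hA
    _ ≤ upsCore A' B' := upsCore_mono_right hB hBB' hB'A' (hA.trans_le hAA')

lemma upsCore_mul {t : ℝ} (ht : 0 ≤ t) : upsCore (t * A) (t * B) = t * upsCore A B := by
  rcases ht.eq_or_lt with rfl | ht
  · simp [upsCore]
  rcases eq_or_ne A 0 with rfl | hA
  · simp [upsCore]
    ring
  unfold upsCore
  field_simp

lemma cube_div_sq_add_le {u₁ u₂ A₁ A₂ : ℝ} (hu₁ : 0 ≤ u₁) (hu₂ : 0 ≤ u₂) (hA₁ : 0 < A₁)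
    (hA₂ : 0 < A₂) :
    (u₁ + u₂) ^ 3 / (A₁ + A₂) ^ 2 ≤ u₁ ^ 3 / A₁ ^ 2 + u₂ ^ 3 / A₂ ^ 2 := by
  rw [div_add_div _ _ (by positivity) (by positivity),
    div_le_div_iff₀ (by positivity) (by positivity)]
  have hsos : (u₁ ^ 3 * A₂ ^ 2 + A₁ ^ 2 * u₂ ^ 3) * (A₁ + A₂) ^ 2
      - (u₁ + u₂) ^ 3 * (A₁ ^ 2 * A₂ ^ 2)
      = (u₁ * A₂ - u₂ * A₁) ^ 2 * (u₁ * A₂ * (2 * A₁ + A₂) + u₂ * A₁ * (A₁ + 2 * A₂)) := by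
    ring
  have : 0 ≤ (u₁ * A₂ - u₂ * A₁) ^ 2 * (u₁ * A₂ * (2 * A₁ + A₂) + u₂ * A₁ * (A₁ + 2 * A₂)) := by
    positivity
  linarith

lemma upsCore_add_le {A₁ A₂ B₁ B₂ : ℝ} (hB₁ : 0 ≤ B₁) (hBA₁ : B₁ ≤ A₁) (hB₂ : 0 ≤ B₂)
    (hBA₂ : B₂ ≤ A₂) : upsCore (A₁ + A₂) (B₁ + B₂) ≤ upsCore A₁ B₁ + upsCore A₂ B₂ := by
  rcases (hB₁.trans hBA₁).eq_or_lt with rfl | hA₁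
  · obtain rfl : B₁ = 0 := le_antisymm hBA₁ hB₁
    simp [upsCore_zero_zero]
  rcases (hB₂.trans hBA₂).eq_or_lt with rfl | hA₂
  · obtain rfl : B₂ = 0 := le_antisymm hBA₂ hB₂
    simp [upsCore_zero_zero]
  have h := cube_div_sq_add_le (sub_nonneg.2 hBA₁) (sub_nonneg.2 hBA₂) hA₁ hA₂
  unfold upsCore
  rw [add_sub_add_comm]
  linarith

end upsCore

lemma pow_le_two_pow_mul_add_pow {a b c : ℝ} (ha : 0 ≤ a) (hb : 0 ≤ b) (hc : 0 ≤ c)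
    (h : c ≤ a + b) (n : ℕ) : c ^ n ≤ 2 ^ (n - 1) * (a ^ n + b ^ n) :=
  (pow_le_pow_left₀ hc h n).trans (add_pow_le ha hb n)

lemma upsCore_pow_le {a₁ a₂ a c₁ c₂ c : ℝ} (hc₁ : 0 ≤ c₁) (hc₂ : 0 ≤ c₂) (hc : 0 ≤ c)
    (hca₁ : c₁ ≤ a₁) (hca₂ : c₂ ≤ a₂) (hca : c ≤ a) (ha_le : a ≤ a₁ + a₂) (hc_le : c ≤ c₁ + c₂)
    (n : ℕ) :
    upsCore (a ^ n) (c ^ n)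
      ≤ 2 ^ (n - 1) * (upsCore (a₁ ^ n) (c₁ ^ n) + upsCore (a₂ ^ n) (c₂ ^ n)) := by
  have ha₁ := hc₁.trans hca₁
  have ha₂ := hc₂.trans hca₂
  have hpow := fun {u v : ℝ} (hu : 0 ≤ u) (huv : u ≤ v) => pow_le_pow_left₀ hu huv n
  calc upsCore (a ^ n) (c ^ n)
      ≤ upsCore (2 ^ (n - 1) * (a₁ ^ n + a₂ ^ n)) (2 ^ (n - 1) * (c₁ ^ n + c₂ ^ n)) :=
        upsCore_mono (by positivity) (hpow hc hca)
          (pow_le_two_pow_mul_add_pow ha₁ ha₂ (hc.trans hca) ha_le n)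
          (pow_le_two_pow_mul_add_pow hc₁ hc₂ hc hc_le n)
          (by gcongr)
    _ = 2 ^ (n - 1) * upsCore (a₁ ^ n + a₂ ^ n) (c₁ ^ n + c₂ ^ n) := upsCore_mul (by positivity)
    _ ≤ 2 ^ (n - 1) * (upsCore (a₁ ^ n) (c₁ ^ n) + upsCore (a₂ ^ n) (c₂ ^ n)) := by
        gcongr
        exact upsCore_add_le (by positivity) (hpow hc₁ hca₁) (by positivity) (hpow hc₂ hca₂)

lemma IsCadlag.exists_isBounded_image_mem_nhds {d : ℕ} {x : Pth d} (hx : IsCadlag x)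
    (θ : PathDom) : ∃ t ∈ 𝓝 θ, Bornology.IsBounded (x '' t) := by
  obtain ⟨L, hL⟩ := hx.2 θ
  obtain ⟨s₁, hs₁, hb₁⟩ := Metric.exists_isBounded_image_of_tendsto hL
  obtain ⟨s₂, hs₂, hb₂⟩ := Metric.exists_isBounded_image_of_tendsto (hx.1 θ).tendsto
  refine ⟨s₁ ∪ s₂, ?_, by simpa only [Set.image_union] using hb₁.union hb₂⟩
  rw [← nhdsLT_sup_nhdsGE θ]
  exact union_mem_sup hs₁ hs₂

lemma isCompact_Ici_pathDom (T : PathDom) : IsCompact (Set.Ici T) := by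
  have h : Set.Ici T = Subtype.val ⁻¹' Set.Icc T.1 0 := by
    ext θ
    exact ⟨fun h => ⟨h, θ.2⟩, fun h => h.1⟩
  rw [h]
  exact isClosed_Iic.isProperMap_subtypeVal.isCompact_preimage isCompact_Icc

lemma isBounded_range_of_mem_D0 {d : ℕ} {x : Pth d} (hx : x ∈ D0 d) :
    Bornology.IsBounded (Set.range x) := by
  obtain ⟨s, hs, hbs⟩ := Metric.exists_isBounded_image_of_tendsto hx.2
  obtain ⟨T, hT⟩ := mem_atBot_sets.1 hs
  have hbT := Bornology.isBounded_image_of_isLocallyBounded_of_isCompact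
    (isCompact_Ici_pathDom T) hx.1.exists_isBounded_image_mem_nhds
  refine (hbs.union hbT).subset ?_
  rintro _ ⟨θ, rfl⟩
  rcases le_total θ T with h | h
  · exact Or.inl ⟨θ, hT θ h, rfl⟩
  · exact Or.inr ⟨θ, h, rfl⟩

lemma bddAbove_norm_of_mem_D0 {d : ℕ} {x : Pth d} (hx : x ∈ D0 d) :
    BddAbove (Set.range fun θ => ‖x θ‖) := by
  obtain ⟨C, hC⟩ := (isBounded_range_of_mem_D0 hx).exists_norm_le
  exact ⟨C, Set.forall_mem_range.2 fun θ => hC _ ⟨θ, rfl⟩⟩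

section normC

variable {d : ℕ} {x y : Pth d}

lemma norm_le_normC (hx : BddAbove (Set.range fun θ => ‖x θ‖)) (θ : PathDom) :
    ‖x θ‖ ≤ normC x :=
  le_ciSup hx θ

lemma norm_add_apply_le_normC_add (hx : BddAbove (Set.range fun θ => ‖x θ‖))
    (hy : BddAbove (Set.range fun θ => ‖y θ‖)) (θ : PathDom) :
    ‖(x + y) θ‖ ≤ normC x + normC y :=
  (norm_add_le _ _).trans (add_le_add (norm_le_normC hx θ) (norm_le_normC hy θ))

lemma normC_add_le (hx : BddAbove (Set.range fun θ => ‖x θ‖))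
    (hy : BddAbove (Set.range fun θ => ‖y θ‖)) : normC (x + y) ≤ normC x + normC y :=
  ciSup_le (norm_add_apply_le_normC_add hx hy)

lemma bddAbove_norm_add (hx : BddAbove (Set.range fun θ => ‖x θ‖))
    (hy : BddAbove (Set.range fun θ => ‖y θ‖)) : BddAbove (Set.range fun θ => ‖(x + y) θ‖) :=
  ⟨_, Set.forall_mem_range.2 (norm_add_apply_le_normC_add hx hy)⟩

end normC

lemma Ups0_eq_upsCore {d : ℕ} (m : ℕ) (M : ℝ) (x : Pth d) :
    Ups0 m M x = upsCore (normC x ^ (2 * m)) (‖x zeroPt‖ ^ (2 * m))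
      + (M - 3) * ‖x zeroPt‖ ^ (2 * m) := by
  unfold Ups0 upsCore
  -- At `|x|_C = 0` the `if` branch is matched by `(…) / 0 = 0` when `m ≠ 0`, and by
  -- `0 ^ 0 = 1 = ‖x 0‖ ^ 0` when `m = 0`.
  split_ifs with hx
  · rcases m.eq_zero_or_pos with rfl | hm
    · simp
    · simp [hx, hm.ne']
      ring
  · rw [← pow_mul, show 2 * m * 2 = 4 * m by ring]
    ring

theorem ups_subadditivity_general {d : ℕ} (m : ℕ) (M : ℝ) (hM : 3 ≤ M)
    (x y : Pth d) (hx : x ∈ D0 d) (hy : y ∈ D0 d) :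
    Ups0 m M (x + y) ≤ 2 ^ (2 * m - 1) * (Ups0 m M x + Ups0 m M y) := by
  have hbx := bddAbove_norm_of_mem_D0 hx
  have hby := bddAbove_norm_of_mem_D0 hy
  have hcore := upsCore_pow_le (norm_nonneg (x zeroPt)) (norm_nonneg (y zeroPt))
    (norm_nonneg ((x + y) zeroPt)) (norm_le_normC hbx zeroPt) (norm_le_normC hby zeroPt)
    (norm_le_normC (bddAbove_norm_add hbx hby) zeroPt) (normC_add_le hbx hby)
    (norm_add_le _ _) (2 * m)
  have hpoint := pow_le_two_pow_mul_add_pow (norm_nonneg (x zeroPt)) (norm_nonneg (y zeroPt))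
    (norm_nonneg ((x + y) zeroPt)) (norm_add_le _ _) (2 * m)
  have hM3 : 0 ≤ M - 3 := by linarith
  rw [Ups0_eq_upsCore, Ups0_eq_upsCore, Ups0_eq_upsCore]
  linear_combination hcore + mul_le_mul_of_nonneg_left hpoint hM3

/-- Lemma 3.3: for `m ∈ ℕ⁺`, `M ≥ 3`, and `x, y ∈ 𝒟₀`,
`Υ^{m,M}(x+y) ≤ 2^{2m-1} (Υ^{m,M}(x) + Υ^{m,M}(y))`. -/
theorem ups_subadditivity {d : ℕ} (m : ℕ) (hm : 1 ≤ m) (M : ℝ) (hM : 3 ≤ M)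
    (x y : Pth d) (hx : x ∈ D0 d) (hy : y ∈ D0 d) :
    Ups0 m M (x + y) ≤ 2 ^ (2 * m - 1) * (Ups0 m M x + Ups0 m M y) :=
  ups_subadditivity_general m M hM x y hx hy

end PathHJB
end
end

section
/- Ῡ is a gauge-type function under d_∞ (Remark 3.2(iii), inequality (3.16)): For all (l,x), (s,y) ∈ Λ̂, one has Ῡ(l,x,s,y) ≥ |x_{(s-l)∨0} - y_{(l-s)∨0}|_C^6 + |s-l|². Consequently, for each t ≥ 0 the functional ((s,x),(l,y)) ↦ Ῡ(s,x,l,y) restricted to Λ^t × Λ^t is a gauge-type function under d_∞: it is continuous, it vanishes on the diagonal, and for every ε > 0 there is δ > 0 such that Ῡ(s,x,l,y) ≤ δ implies d_∞((s,x),(l,y)) < ε. -/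
open Filter Topology MeasureTheory Matrix
open scoped RealInnerProductSpace

noncomputable section

namespace PathHJB

/-!
Write `r = |x_{(s-l)∨0} - y_{(l-s)∨0}|_C` and `a = |x(0) - y(0)|`. With `u = r^{2m}` and
`b = a^{2m}` one has `S_m = (u - b)³/u²` and `0 ≤ b ≤ u`, so (3.16) is the elementary
inequality `(u - b)³/u² ≥ u - 3b`, i.e. `b²(3u - b) ≥ 0`. Since `d_∞ = |s - l| + r`, the gauge
property is then immediate. For continuity, `r` is the uniform distance between the two paths
stopped at their own times, a pseudometric dominated by `d_∞`; hence `(r, a, l - s)` moves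
1-Lipschitzly with the pair of points, and `Ῡ` is a function of these coordinates that is
continuous on `{0 ≤ a ≤ r}`: at `r = 0` because `0 ≤ (u - b)³/u² ≤ u` there.
-/

open Set Function

lemma sub_three_mul_le_cube_div_sq {u b : ℝ} (hb : 0 ≤ b) (hbu : b ≤ u) :
    u - 3 * b ≤ (u - b) ^ 3 / u ^ 2 := by
  rcases (hb.trans hbu).eq_or_lt with hu | hu
  · simp [← hu, le_antisymm (hbu.trans hu.ge) hb]
  · rw [le_div_iff₀ (by positivity)]
    nlinarith [mul_nonneg (sq_nonneg b) (by linarith : 0 ≤ 3 * u - b)]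

lemma cube_div_sq_le {u b : ℝ} (hb : 0 ≤ b) (hbu : b ≤ u) : (u - b) ^ 3 / u ^ 2 ≤ u :=
  div_le_of_le_mul₀ (sq_nonneg u) (hb.trans hbu) <| by
    rw [← pow_succ']
    exact pow_le_pow_left₀ (by linarith) (by linarith) 3

lemma continuousWithinAt_cube_div_sq {z : ℝ × ℝ} (hz : z ∈ {w : ℝ × ℝ | 0 ≤ w.2 ∧ w.2 ≤ w.1}) :
    ContinuousWithinAt (fun w : ℝ × ℝ => (w.1 - w.2) ^ 3 / w.1 ^ 2)
      {w | 0 ≤ w.2 ∧ w.2 ≤ w.1} z := by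
  rcases (hz.1.trans hz.2).eq_or_lt with hz0 | hzpos
  · obtain rfl : z = (0, 0) := Prod.ext hz0.symm (le_antisymm (hz.2.trans hz0.ge) hz.1)
    have hfst : Tendsto (fun w : ℝ × ℝ => w.1) (𝓝[{w | 0 ≤ w.2 ∧ w.2 ≤ w.1}] (0, 0)) (𝓝 0) :=
      continuous_fst.continuousWithinAt
    rw [ContinuousWithinAt, show ((0 : ℝ) - 0) ^ 3 / 0 ^ 2 = 0 by simp]
    refine squeeze_zero' ?_ ?_ hfst
    · exact eventually_nhdsWithin_of_forall fun w hw =>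
        div_nonneg (pow_nonneg (by linarith [hw.2]) 3) (sq_nonneg _)
    · exact eventually_nhdsWithin_of_forall fun w hw => cube_div_sq_le hw.1 hw.2
  · exact ((continuousAt_fst.sub continuousAt_snd).pow 3).div (continuousAt_fst.pow 2)
      (pow_ne_zero 2 hzpos.ne') |>.continuousWithinAt

def upsProfile (m : ℕ) (M : ℝ) (z : ℝ × ℝ × ℝ) : ℝ :=
  (z.1 ^ (2 * m) - z.2.1 ^ (2 * m)) ^ 3 / (z.1 ^ (2 * m)) ^ 2 + M * z.2.1 ^ (2 * m) + z.2.2 ^ 2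

lemma continuousWithinAt_upsProfile (m : ℕ) (M : ℝ) {z : ℝ × ℝ × ℝ}
    (hz : z ∈ {w : ℝ × ℝ × ℝ | 0 ≤ w.2.1 ∧ w.2.1 ≤ w.1}) :
    ContinuousWithinAt (upsProfile m M) {w | 0 ≤ w.2.1 ∧ w.2.1 ≤ w.1} z := by
  have hpow : Continuous fun w : ℝ × ℝ × ℝ => (w.1 ^ (2 * m), w.2.1 ^ (2 * m)) := by fun_prop
  have hmaps : MapsTo (fun w : ℝ × ℝ × ℝ => (w.1 ^ (2 * m), w.2.1 ^ (2 * m)))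
      {w | 0 ≤ w.2.1 ∧ w.2.1 ≤ w.1} {w | 0 ≤ w.2 ∧ w.2 ≤ w.1} :=
    fun w hw => ⟨pow_nonneg hw.1 _, pow_le_pow_left₀ hw.1 hw.2 _⟩
  have hb : Continuous fun w : ℝ × ℝ × ℝ => M * w.2.1 ^ (2 * m) := by fun_prop
  have hτ : Continuous fun w : ℝ × ℝ × ℝ => w.2.2 ^ 2 := by fun_prop
  exact (((continuousWithinAt_cube_div_sq (hmaps hz)).comp
    (f := fun w : ℝ × ℝ × ℝ => (w.1 ^ (2 * m), w.2.1 ^ (2 * m))) hpow.continuousWithinAt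
    hmaps).add hb.continuousWithinAt).add hτ.continuousWithinAt

lemma bddAbove_range_norm_sub {ι E : Type*} [SeminormedAddCommGroup E] {f g : ι → E}
    (hf : BddAbove (range (‖f ·‖))) (hg : BddAbove (range (‖g ·‖))) :
    BddAbove (range fun i => ‖f i - g i‖) := by
  obtain ⟨A, hA⟩ := hf
  obtain ⟨B, hB⟩ := hg
  exact ⟨A + B, by
    rintro _ ⟨i, rfl⟩
    exact (norm_sub_le _ _).trans (add_le_add (hA ⟨i, rfl⟩) (hB ⟨i, rfl⟩))⟩

lemma ciSup_norm_sub_le_add {ι E : Type*} [Nonempty ι] [SeminormedAddCommGroup E]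
    {f g h : ι → E} (hfg : BddAbove (range fun i => ‖f i - g i‖))
    (hgh : BddAbove (range fun i => ‖g i - h i‖)) :
    ⨆ i, ‖f i - h i‖ ≤ (⨆ i, ‖f i - g i‖) + ⨆ i, ‖g i - h i‖ :=
  ciSup_le fun i => (norm_sub_le_norm_sub_add_norm_sub _ _ _).trans
    (add_le_add (le_ciSup hfg i) (le_ciSup hgh i))

section Paths

variable {d : ℕ}

lemma path_congr (x : Pth d) {θ η : PathDom} (h : θ.1 = η.1) : x θ = x η :=
  congrArg x (Subtype.ext h)

def clampPt (v : ℝ) : PathDom := ⟨min v 0, mem_Iic.2 (min_le_right _ _)⟩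

@[simp] lemma coe_clampPt (v : ℝ) : (clampPt v : ℝ) = min v 0 := rfl

lemma shift_apply (x : Pth d) (h : ℝ) (θ : PathDom) : shift x h θ = x (clampPt (θ.1 + h)) := by
  unfold shift
  split_ifs with hθ
  · exact path_congr x (by simp [zeroPt]; linarith)
  · exact path_congr x (by simp; linarith)

lemma shift_zero (x : Pth d) : shift x 0 = x :=
  funext fun θ => by
    rw [shift_apply]
    exact path_congr x (by rw [coe_clampPt, add_zero]; exact min_eq_left θ.2)

lemma normC_nonneg (x : Pth d) : 0 ≤ normC x :=
  Real.iSup_nonneg fun _ => norm_nonneg _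

lemma normC_neg (x : Pth d) : normC (-x) = normC x := by
  simp [normC]

lemma normC_zero : normC (0 : Pth d) = 0 := by
  simp [normC]

lemma norm_le_normC_or_normC_eq_zero (x : Pth d) (θ : PathDom) :
    ‖x θ‖ ≤ normC x ∨ normC x = 0 := by
  by_cases hx : BddAbove (range (‖x ·‖))
  · exact .inl (le_ciSup hx θ)
  · exact .inr (Real.iSup_of_not_bddAbove hx)

lemma bddAbove_range_norm_of_mem_C0 {x : Pth d} (hx : x ∈ C0 d) : BddAbove (range (‖x ·‖)) := by
  obtain ⟨hcont, hlim⟩ := hx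
  obtain ⟨b, hb⟩ := eventually_atBot.mp
    (hlim.norm.eventually (gt_mem_nhds (by simp : ‖(0 : Eucl d)‖ < 1)))
  have hcpt : IsCompact {θ : PathDom | b ≤ θ} := by
    have : {θ : PathDom | b ≤ θ} = Subtype.val ⁻¹' Icc b.1 0 :=
      ext fun θ => ⟨fun h => ⟨h, θ.2⟩, fun h => h.1⟩
    rw [this]
    exact isClosed_Iic.isClosedEmbedding_subtypeVal.isCompact_preimage isCompact_Icc
  obtain ⟨A, hA⟩ := (hcpt.image (continuous_norm.comp hcont)).bddAbove
  refine ⟨max A 1, ?_⟩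
  rintro _ ⟨θ, rfl⟩
  rcases le_total θ b with h | h
  · exact (hb θ h).le.trans (le_max_right _ _)
  · exact (hA ⟨θ, h, rfl⟩).trans (le_max_left _ _)

/-- `x_{(s-t)∨0} - y_{(t-s)∨0}` for `p = (t, x)`, `q = (s, y)`. -/
def pathGap (p q : ℝ × Pth d) : Pth d :=
  shift p.2 (max (q.1 - p.1) 0) - shift q.2 (max (p.1 - q.1) 0)

lemma pathGap_swap (p q : ℝ × Pth d) : pathGap q p = -pathGap p q :=
  (neg_sub _ _).symm

lemma normC_pathGap_comm (p q : ℝ × Pth d) : normC (pathGap q p) = normC (pathGap p q) := by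
  rw [pathGap_swap, normC_neg]

lemma pathGap_apply_zeroPt (p q : ℝ × Pth d) : pathGap p q zeroPt = p.2 zeroPt - q.2 zeroPt := by
  simp only [pathGap, Pi.sub_apply, shift_apply]
  congr 1 <;> exact path_congr _ (min_eq_right (by simp [zeroPt]))

lemma dInfty_eq (p q : ℝ × Pth d) : dInfty p q = |q.1 - p.1| + normC (pathGap p q) := by
  unfold dInfty pathGap
  split_ifs with h
  · rw [max_eq_left (by linarith), max_eq_right (by linarith), shift_zero]
  · rw [max_eq_right (by linarith), max_eq_left (by linarith), shift_zero, abs_sub_comm,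
      ← normC_neg, neg_sub]

lemma normC_pathGap_le_dInfty (p q : ℝ × Pth d) : normC (pathGap p q) ≤ dInfty p q := by
  rw [dInfty_eq]
  linarith [abs_nonneg (q.1 - p.1)]

lemma abs_sub_le_dInfty (p q : ℝ × Pth d) : |q.1 - p.1| ≤ dInfty p q := by
  rw [dInfty_eq]
  linarith [normC_nonneg (pathGap p q)]

/-- `u ↦ x((u - t) ∧ 0)` for `p = (t, x)`: the path on the whole time line, stopped at time `t`. -/
def stoppedPath (p : ℝ × Pth d) (u : ℝ) : Eucl d :=
  p.2 (clampPt (u - p.1))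

lemma stoppedPath_of_le {p : ℝ × Pth d} {u : ℝ} (h : p.1 ≤ u) : stoppedPath p u = p.2 zeroPt :=
  path_congr p.2 (min_eq_right (by linarith))

lemma bddAbove_range_norm_stoppedPath {p : ℝ × Pth d} (hp : BddAbove (range (‖p.2 ·‖))) :
    BddAbove (range (‖stoppedPath p ·‖)) :=
  hp.mono (range_comp_subset_range _ (‖p.2 ·‖))

lemma pathGap_apply_eq_stoppedPath (p q : ℝ × Pth d) (u : ℝ) :
    pathGap p q (clampPt (u - max p.1 q.1)) = stoppedPath p u - stoppedPath q u := by
  simp only [pathGap, Pi.sub_apply, shift_apply, stoppedPath]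
  congr 1 <;> refine path_congr _ ?_ <;> simp only [coe_clampPt, min_def, max_def] <;>
    split_ifs <;> linarith

lemma normC_pathGap_eq_iSup (p q : ℝ × Pth d) :
    normC (pathGap p q) = ⨆ u, ‖stoppedPath p u - stoppedPath q u‖ := by
  have hsurj : Surjective fun u => clampPt (u - max p.1 q.1) :=
    fun θ => ⟨θ.1 + max p.1 q.1, Subtype.ext <| by
      rw [coe_clampPt, add_sub_cancel_right]; exact min_eq_left θ.2⟩
  rw [normC, ← hsurj.iSup_comp]
  simp_rw [pathGap_apply_eq_stoppedPath]

variable {p q p' q' : ℝ × Pth d}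

lemma norm_sub_zeroPt_le_normC_pathGap (hp : BddAbove (range (‖p.2 ·‖)))
    (hq : BddAbove (range (‖q.2 ·‖))) : ‖p.2 zeroPt - q.2 zeroPt‖ ≤ normC (pathGap p q) := by
  rw [normC_pathGap_eq_iSup, ← stoppedPath_of_le (le_max_left p.1 q.1),
    ← stoppedPath_of_le (le_max_right p.1 q.1)]
  exact le_ciSup (bddAbove_range_norm_sub (bddAbove_range_norm_stoppedPath hp)
    (bddAbove_range_norm_stoppedPath hq)) _

lemma normC_pathGap_le_add {r : ℝ × Pth d} (hp : BddAbove (range (‖p.2 ·‖)))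
    (hq : BddAbove (range (‖q.2 ·‖))) (hr : BddAbove (range (‖r.2 ·‖))) :
    normC (pathGap p r) ≤ normC (pathGap p q) + normC (pathGap q r) := by
  simp only [normC_pathGap_eq_iSup]
  have hp := bddAbove_range_norm_stoppedPath hp
  have hq := bddAbove_range_norm_stoppedPath hq
  have hr := bddAbove_range_norm_stoppedPath hr
  exact ciSup_norm_sub_le_add (bddAbove_range_norm_sub hp hq) (bddAbove_range_norm_sub hq hr)

lemma abs_normC_pathGap_sub_le (hp : BddAbove (range (‖p.2 ·‖)))
    (hq : BddAbove (range (‖q.2 ·‖))) (hp' : BddAbove (range (‖p'.2 ·‖)))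
    (hq' : BddAbove (range (‖q'.2 ·‖))) :
    |normC (pathGap p' q') - normC (pathGap p q)| ≤
      normC (pathGap p p') + normC (pathGap q q') := by
  have h₁ := normC_pathGap_le_add hp' hp hq'
  have h₂ := normC_pathGap_le_add hp hq hq'
  have h₃ := normC_pathGap_le_add hp hp' hq
  have h₄ := normC_pathGap_le_add hp' hq' hq
  rw [normC_pathGap_comm p p'] at h₁
  rw [normC_pathGap_comm q q'] at h₄
  rw [abs_le]
  constructor <;> linarith

/-- The coordinates `(r, a, s - t)` of the pair `p = (t, x)`, `q = (s, y)`. -/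
def gapCoords (p q : ℝ × Pth d) : ℝ × ℝ × ℝ :=
  (normC (pathGap p q), ‖p.2 zeroPt - q.2 zeroPt‖, q.1 - p.1)

lemma gapCoords_mem (hp : BddAbove (range (‖p.2 ·‖))) (hq : BddAbove (range (‖q.2 ·‖))) :
    gapCoords p q ∈ {w : ℝ × ℝ × ℝ | 0 ≤ w.2.1 ∧ w.2.1 ≤ w.1} :=
  ⟨norm_nonneg _, norm_sub_zeroPt_le_normC_pathGap hp hq⟩

lemma dist_gapCoords_le (hp : BddAbove (range (‖p.2 ·‖)))
    (hq : BddAbove (range (‖q.2 ·‖))) (hp' : BddAbove (range (‖p'.2 ·‖)))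
    (hq' : BddAbove (range (‖q'.2 ·‖))) :
    dist (gapCoords p' q') (gapCoords p q) ≤ dInfty p p' + dInfty q q' := by
  have hr := abs_normC_pathGap_sub_le hp hq hp' hq'
  have hp₀ := norm_sub_zeroPt_le_normC_pathGap hp hp'
  have hq₀ := norm_sub_zeroPt_le_normC_pathGap hq hq'
  have ha : |‖p'.2 zeroPt - q'.2 zeroPt‖ - ‖p.2 zeroPt - q.2 zeroPt‖| ≤
      ‖q.2 zeroPt - q'.2 zeroPt‖ + ‖p.2 zeroPt - p'.2 zeroPt‖ := by
    refine (abs_norm_sub_norm_le _ _).trans (le_of_eq_of_le ?_ (norm_sub_le _ _))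
    congr 1
    abel
  have hτ : |(q'.1 - p'.1) - (q.1 - p.1)| ≤ |q'.1 - q.1| + |p'.1 - p.1| := by
    rw [show (q'.1 - p'.1) - (q.1 - p.1) = (q'.1 - q.1) - (p'.1 - p.1) by ring]
    exact abs_sub _ _
  simp only [Prod.dist_eq, Real.dist_eq, gapCoords]
  refine max_le ?_ (max_le ?_ ?_) <;>
    linarith [normC_pathGap_le_dInfty p p', normC_pathGap_le_dInfty q q',
      abs_sub_le_dInfty p p', abs_sub_le_dInfty q q']

/-- The `if` in `SmP` is redundant, as `x / 0 = 0` and `0 ^ 0 = 1` in Lean. -/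
lemma smP_eq (m : ℕ) (p q : ℝ × Pth d) :
    SmP m p q = (normC (pathGap p q) ^ (2 * m) - ‖p.2 zeroPt - q.2 zeroPt‖ ^ (2 * m)) ^ 3 /
      (normC (pathGap p q) ^ (2 * m)) ^ 2 := by
  change (if normC (pathGap p q) = 0 then 0 else
    (normC (pathGap p q) ^ (2 * m) - ‖p.2 zeroPt - q.2 zeroPt‖ ^ (2 * m)) ^ 3 /
      normC (pathGap p q) ^ (4 * m)) = _
  split_ifs with h
  · rcases m.eq_zero_or_pos with rfl | hm
    · simp
    · simp [h, hm.ne']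
  · ring

lemma upsBarP_eq_upsProfile (m : ℕ) (M : ℝ) (p q : ℝ × Pth d) :
    UpsBarP m M p q = upsProfile m M (gapCoords p q) := by
  rw [UpsBarP, UpsP, smP_eq]
  rfl

lemma pow_le_smP_add_mul {m : ℕ} {M : ℝ} (hM : 3 ≤ M) (p q : ℝ × Pth d) :
    normC (pathGap p q) ^ (2 * m) ≤ SmP m p q + M * ‖p.2 zeroPt - q.2 zeroPt‖ ^ (2 * m) := by
  have hb : 0 ≤ ‖p.2 zeroPt - q.2 zeroPt‖ ^ (2 * m) := by positivity
  have hMb := mul_le_mul_of_nonneg_right hM hb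
  rcases norm_le_normC_or_normC_eq_zero (pathGap p q) zeroPt with h | h
  · rw [pathGap_apply_zeroPt] at h
    have := sub_three_mul_le_cube_div_sq hb (pow_le_pow_left₀ (norm_nonneg _) h (2 * m))
    rw [smP_eq]
    linarith
  · have hS : SmP m p q = 0 := if_pos h
    rw [hS, h]
    have := pow_le_pow_left₀ le_rfl (norm_nonneg (p.2 zeroPt - q.2 zeroPt)) (2 * m)
    linarith

theorem normC_pathGap_pow_add_sq_le_upsBarP {m : ℕ} {M : ℝ} (hM : 3 ≤ M) (p q : ℝ × Pth d) :
    normC (pathGap p q) ^ (2 * m) + (q.1 - p.1) ^ 2 ≤ UpsBarP m M p q := by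
  have := pow_le_smP_add_mul (m := m) hM p q
  rw [UpsBarP, UpsP]
  linarith

lemma upsBarP_self {m : ℕ} (hm : m ≠ 0) (M : ℝ) (p : ℝ × Pth d) : UpsBarP m M p p = 0 := by
  simp [UpsBarP, UpsP, SmP, normC_zero, hm]

lemma exists_dInfty_lt_of_upsBarP_le {m : ℕ} {M : ℝ} (hm : m ≠ 0) (hM : 3 ≤ M) {ε : ℝ}
    (hε : 0 < ε) : ∃ δ > 0, ∀ p q : ℝ × Pth d, UpsBarP m M p q ≤ δ → dInfty p q < ε := by
  refine ⟨min ((ε / 3) ^ (2 * m)) ((ε / 3) ^ 2), by positivity, fun p q hδ => ?_⟩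
  have key := normC_pathGap_pow_add_sq_le_upsBarP (m := m) hM p q
  have hr₀ := pow_nonneg (normC_nonneg (pathGap p q)) (2 * m)
  have hr : normC (pathGap p q) ≤ ε / 3 :=
    le_of_pow_le_pow_left₀ (n := 2 * m) (by omega) (by positivity)
      (by linarith [min_le_left ((ε / 3) ^ (2 * m)) ((ε / 3) ^ 2), sq_nonneg (q.1 - p.1)])
  have hτ : |q.1 - p.1| ≤ ε / 3 :=
    le_of_pow_le_pow_left₀ two_ne_zero (by positivity)
      (by rw [sq_abs]; linarith [min_le_right ((ε / 3) ^ (2 * m)) ((ε / 3) ^ 2)])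
  rw [dInfty_eq]
  linarith

lemma exists_abs_upsBarP_sub_lt (m : ℕ) (M : ℝ) (hp : BddAbove (range (‖p.2 ·‖)))
    (hq : BddAbove (range (‖q.2 ·‖))) {ε : ℝ} (hε : 0 < ε) :
    ∃ δ > 0, ∀ p' q' : ℝ × Pth d, BddAbove (range (‖p'.2 ·‖)) → BddAbove (range (‖q'.2 ·‖)) →
      dInfty p p' + dInfty q q' < δ → |UpsBarP m M p' q' - UpsBarP m M p q| < ε := by
  obtain ⟨δ, hδ, h⟩ :=
    Metric.continuousWithinAt_iff.1 (continuousWithinAt_upsProfile m M (gapCoords_mem hp hq)) ε hε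
  refine ⟨δ, hδ, fun p' q' hp' hq' hD => ?_⟩
  rw [upsBarP_eq_upsProfile, upsBarP_eq_upsProfile, ← Real.dist_eq]
  exact h (gapCoords_mem hp' hq') ((dist_gapCoords_le hp hq hp' hq').trans_lt hD)

end Paths

/-- Remark 3.2(iii), inequality (3.16): `Ῡ` dominates
`|x_{(s-l)∨0} - y_{(l-s)∨0}|_C^6 + |s-l|²`, and hence it is a gauge-type
function under `d_∞` on each `Λ^t × Λ^t`. -/
theorem upsBar_gauge_type {d : ℕ} :
    (∀ p ∈ LamHat d 0, ∀ q ∈ LamHat d 0,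
      normC (shift p.2 (max (q.1 - p.1) 0) - shift q.2 (max (p.1 - q.1) 0)) ^ 6
        + (q.1 - p.1) ^ 2 ≤ UpsBarP 3 3 p q) ∧
    (∀ t : ℝ, 0 ≤ t →
      ((∀ p ∈ Lam d t, ∀ q ∈ Lam d t, ∀ ε > (0:ℝ), ∃ δ > (0:ℝ),
          ∀ p' ∈ Lam d t, ∀ q' ∈ Lam d t,
            dInfty p p' + dInfty q q' < δ →
            |UpsBarP 3 3 p' q' - UpsBarP 3 3 p q| < ε) ∧
       (∀ p ∈ Lam d t, UpsBarP 3 3 p p = 0) ∧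
       (∀ ε > (0:ℝ), ∃ δ > (0:ℝ), ∀ p ∈ Lam d t, ∀ q ∈ Lam d t,
          UpsBarP 3 3 p q ≤ δ → dInfty p q < ε))) := by
  have hbdd {t : ℝ} {p : ℝ × Pth d} (hp : p ∈ Lam d t) : BddAbove (range (‖p.2 ·‖)) :=
    bddAbove_range_norm_of_mem_C0 hp.2
  refine ⟨fun p _ q _ => normC_pathGap_pow_add_sq_le_upsBarP (m := 3) le_rfl p q,
    fun t _ => ⟨?_, fun p _ => upsBarP_self (by norm_num) 3 p, ?_⟩⟩
  · intro p hp q hq ε hε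
    obtain ⟨δ, hδ, h⟩ := exists_abs_upsBarP_sub_lt 3 3 (hbdd hp) (hbdd hq) hε
    exact ⟨δ, hδ, fun p' hp' q' hq' => h p' q' (hbdd hp') (hbdd hq')⟩
  · intro ε hε
    obtain ⟨δ, hδ, h⟩ := exists_dInfty_lt_of_upsBarP_le (d := d) three_ne_zero le_rfl hε
    exact ⟨δ, hδ, fun p _ q _ => h p q⟩

end PathHJB
end
end
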